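/- Let P be a simple polytope in ℝ^n and let c : ℝ^n → ℝ be a linear functional that takes pairwise distinct values on the vertices of P. Then the orientation of G(P) that directs each edge from its endpoint with larger c-value to its endpoint with smaller c-value is an AOF-orientation: it is acyclic and has a unique sink in (the subgraph induced by the vertex set of) every nonempty face of P. -/

import Mathlib

open scoped Classical

abbrev EVec (n : ℕ) := Fin n → ℝ

def IsPolytope {n : ℕ} (P : Set (EVec n)) : Prop :=
  ∃ S : Finset (EVec n), P = convexHull ℝ (S : Set (EVec n))

noncomputable def sdim {n : ℕ} (F : Set (EVec n)) : ℕ :=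
  Module.finrank ℝ (affineSpan ℝ F).direction

def IsFace {n : ℕ} (P F : Set (EVec n)) : Prop :=
  IsExposed ℝ P F ∨ F = ∅ ∨ F = P

def IsKFace {n : ℕ} (P F : Set (EVec n)) (k : ℕ) : Prop :=
  IsFace P F ∧ F.Nonempty ∧ sdim F = k

def IsVertex {n : ℕ} (P : Set (EVec n)) (v : EVec n) : Prop :=
  IsKFace P {v} 0

def Adj {n : ℕ} (P : Set (EVec n)) (v w : EVec n) : Prop :=
  IsKFace P (convexHull ℝ {v, w}) 1

def Neighbors {n : ℕ} (P : Set (EVec n)) (v : EVec n) : Set (EVec n) :=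
  {w | Adj P v w}

def vertSet {n : ℕ} (P : Set (EVec n)) : Set (EVec n) := {v | IsVertex P v}

def vertFace {n : ℕ} (P F : Set (EVec n)) : Set (EVec n) := vertSet P ∩ F

def IsSimplePolytope {n : ℕ} (P : Set (EVec n)) (d : ℕ) : Prop :=
  IsPolytope P ∧ sdim P = d ∧
    ∀ v, IsVertex P v → {F : Set (EVec n) | IsKFace P F (d - 1) ∧ v ∈ F}.ncard = d

/- orientations -/

def IsOrientation {n : ℕ} (P : Set (EVec n)) (O : EVec n → EVec n → Prop) : Prop :=
  (∀ v w, O v w → Adj P v w) ∧ ∀ v w, Adj P v w → (O v w ↔ ¬ O w v)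

def IsAcyclic {n : ℕ} (O : EVec n → EVec n → Prop) : Prop :=
  ∀ v, ¬ Relation.TransGen O v v

def IsSinkOn {n : ℕ} (P : Set (EVec n)) (O : EVec n → EVec n → Prop)
    (W : Set (EVec n)) (w : EVec n) : Prop :=
  w ∈ W ∧ ∀ u ∈ W, Adj P w u → O u w

def IsSourceOn {n : ℕ} (P : Set (EVec n)) (O : EVec n → EVec n → Prop)
    (W : Set (EVec n)) (w : EVec n) : Prop :=
  w ∈ W ∧ ∀ u ∈ W, Adj P w u → O w u

def IsAOF {n : ℕ} (P : Set (EVec n)) (O : EVec n → EVec n → Prop) : Prop :=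
  IsOrientation P O ∧ IsAcyclic O ∧
    ∀ F, IsFace P F → F.Nonempty → ∃! w, IsSinkOn P O (vertFace P F) w

def IsTerminal {n : ℕ} (O : EVec n → EVec n → Prop) (W : Set (EVec n)) : Prop :=
  ∀ v ∈ W, ∀ u, u ∉ W → ¬ O v u

noncomputable def indeg {n : ℕ} (O : EVec n → EVec n → Prop) (v : EVec n) : ℕ :=
  {u | O u v}.ncard

noncomputable def hNum {n : ℕ} (P : Set (EVec n)) (O : EVec n → EVec n → Prop) (k : ℕ) : ℕ :=
  {v | IsVertex P v ∧ indeg O v = k}.ncard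

noncomputable def Hsum {n : ℕ} (P : Set (EVec n)) (d : ℕ) (O : EVec n → EVec n → Prop) : ℕ :=
  ∑ k ∈ Finset.range (d + 1), hNum P O k * 2 ^ k

noncomputable def H2sum {n : ℕ} (P : Set (EVec n)) (d : ℕ) (O : EVec n → EVec n → Prop) : ℕ :=
  ∑ k ∈ Finset.range (d + 1), hNum P O k * Nat.choose k 2

/- walks -/

structure CycSeq (α : Type*) where
  len : ℕ
  seq : ℤ → α

def CycSeq.Periodic {α : Type*} (C : CycSeq α) : Prop :=
  ∀ i : ℤ, C.seq (i + C.len) = C.seq i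

def CycSeq.Equiv {α : Type*} (C C' : CycSeq α) : Prop :=
  C.len = C'.len ∧ ∃ s ε : ℤ, (ε = 1 ∨ ε = -1) ∧ ∀ i : ℤ, C'.seq i = C.seq (ε * i + s)

def IsCSWalk {n : ℕ} (P : Set (EVec n)) (W : CycSeq (EVec n)) : Prop :=
  3 ≤ W.len ∧ W.Periodic ∧
    ∀ i : ℤ, Adj P (W.seq i) (W.seq (i + 1)) ∧ W.seq (i - 1) ≠ W.seq (i + 1)

def Passes {n : ℕ} (W : CycSeq (EVec n)) (i : ℤ) (v₁ v v₂ : EVec n) : Prop :=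
  W.seq i = v ∧
    ((W.seq (i - 1) = v₁ ∧ W.seq (i + 1) = v₂) ∨ (W.seq (i - 1) = v₂ ∧ W.seq (i + 1) = v₁))

def IsFacoidal {n : ℕ} (P : Set (EVec n)) (𝒲 : Set (CycSeq (EVec n))) : Prop :=
  (∀ W ∈ 𝒲, IsCSWalk P W) ∧
  (∀ W ∈ 𝒲, ∀ W', CycSeq.Equiv W W' → W' ∈ 𝒲) ∧
  ∀ v v₁ v₂ : EVec n, IsVertex P v → v₁ ≠ v₂ → Adj P v v₁ → Adj P v v₂ →
    (∃ W ∈ 𝒲, ∃ i : ℤ, Passes W i v₁ v v₂) ∧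
    (∀ W ∈ 𝒲, ∀ W' ∈ 𝒲, ∀ i i' : ℤ,
        Passes W i v₁ v v₂ → Passes W' i' v₁ v v₂ → CycSeq.Equiv W W') ∧
    (∀ W ∈ 𝒲, ∀ i i' : ℤ,
        Passes W i v₁ v v₂ → Passes W i' v₁ v v₂ → (W.len : ℤ) ∣ (i - i'))

def IsFaceWalk {n : ℕ} (P : Set (EVec n)) (W : CycSeq (EVec n)) (F : Set (EVec n)) : Prop :=
  IsCSWalk P W ∧ (∀ i j : ℤ, W.seq i = W.seq j → (W.len : ℤ) ∣ (i - j)) ∧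
    vertFace P F = Set.range W.seq

def twoFaceWalks {n : ℕ} (P : Set (EVec n)) : Set (CycSeq (EVec n)) :=
  {W | ∃ F, IsKFace P F 2 ∧ IsFaceWalk P W F}

noncomputable def numWalks {n : ℕ} (𝒲 : Set (CycSeq (EVec n))) : ℕ :=
  ((fun W => Quot.mk CycSeq.Equiv W) '' 𝒲).ncard

noncomputable def f₂ {n : ℕ} (P : Set (EVec n)) : ℕ := {F : Set (EVec n) | IsKFace P F 2}.ncard

def WalkSinkAt {n : ℕ} (O : EVec n → EVec n → Prop) (W : CycSeq (EVec n)) (i : ℤ) : Prop :=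
  O (W.seq (i - 1)) (W.seq i) ∧ O (W.seq (i + 1)) (W.seq i)

noncomputable def numWalkSinks {n : ℕ} (O : EVec n → EVec n → Prop)
    (W : CycSeq (EVec n)) : ℕ :=
  ((Finset.range W.len).filter (fun i => WalkSinkAt O W (i : ℤ))).card

/- the graph Λ(G(P)) -/

def P2nodes {n : ℕ} (P : Set (EVec n)) : Set (EVec n × Sym2 (EVec n)) :=
  {p | ∃ v₁ v₂ : EVec n, p.2 = s(v₁, v₂) ∧ v₁ ≠ v₂ ∧ Adj P p.1 v₁ ∧ Adj P p.1 v₂}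

def LambdaAdj {n : ℕ} (P : Set (EVec n)) (p q : EVec n × Sym2 (EVec n)) : Prop :=
  p ∈ P2nodes P ∧ q ∈ P2nodes P ∧ p.1 ≠ q.1 ∧
    ∃ x y, x ∈ p.2 ∧ y ∈ q.2 ∧ s(p.1, x) = s(q.1, y)

def IsCycleIn {α : Type*} (A : α → α → Prop) (C : CycSeq α) : Prop :=
  3 ≤ C.len ∧ C.Periodic ∧ (∀ i : ℤ, A (C.seq i) (C.seq (i + 1))) ∧
    ∀ i j : ℤ, C.seq i = C.seq j → (C.len : ℤ) ∣ (i - j)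

def IsTwoFactor {α : Type*} (Nd : Set α) (A : α → α → Prop) (𝒞 : Set (CycSeq α)) : Prop :=
  (∀ C ∈ 𝒞, IsCycleIn A C) ∧
  (∀ C ∈ 𝒞, ∀ C', CycSeq.Equiv C C' → C' ∈ 𝒞) ∧
  ∀ p ∈ Nd, (∃ C ∈ 𝒞, ∃ i : ℤ, C.seq i = p) ∧
    ∀ C ∈ 𝒞, ∀ C' ∈ 𝒞, (∃ i : ℤ, C.seq i = p) → (∃ i : ℤ, C'.seq i = p) → CycSeq.Equiv C C'

/- spanned faces -/

def Spans {n : ℕ} (P : Set (EVec n)) (v : EVec n) (S F : Set (EVec n)) : Prop :=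
  IsKFace P F S.ncard ∧ v ∈ F ∧ S ⊆ F ∧ ∀ u ∈ Neighbors P v \ S, u ∉ F

/-! Along every directed edge `c` decreases, so the orientation is acyclic and the `c`-minimal
vertex of a face is a sink of it. Uniqueness is the fact behind the simplex method: a vertex of a
face `F` that does not minimize `c` on `F` has a neighbour in `F` with a smaller value of `c`. -/

open Set

section LinearFunctional

variable {E L : Type*} [AddCommGroup E] [Module ℝ E] [FunLike L E ℝ] [LinearMapClass L ℝ E ℝ]

theorem le_of_mem_convexHull (l : L) {s : Set E} {a : ℝ} (h : ∀ y ∈ s, l y ≤ a) {x : E}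
    (hx : x ∈ convexHull ℝ s) : l x ≤ a :=
  convexHull_min h (convex_halfSpace_le ⟨map_add l, map_smul l⟩ a) hx

theorem exists_lt_of_mem_convexHull (l : L) {s : Set E} {a : ℝ} {x : E}
    (hx : x ∈ convexHull ℝ s) (hxa : l x < a) : ∃ y ∈ s, l y < a := by
  by_contra! h
  exact not_le.2 hxa (convexHull_min h (convex_halfSpace_ge ⟨map_add l, map_smul l⟩ a) hx)

theorem mem_convexHull_filter_of_forall_le (l : L) {T : Finset E} {x : E}
    (hx : x ∈ convexHull ℝ (T : Set E)) (hmax : ∀ y ∈ T, l y ≤ l x) :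
    x ∈ convexHull ℝ (T.filter (l · = l x) : Set E) := by
  rw [Finset.convexHull_eq] at hx
  obtain ⟨μ, hμ0, hμ1, hxμ⟩ := hx
  have hlx : ∑ y ∈ T, μ y * (l x - l y) = 0 := by
    have : l x = ∑ y ∈ T, μ y * l y := by
      conv_lhs => rw [← hxμ, Finset.centerMass_eq_of_sum_1 _ _ hμ1]
      simp [map_sum, map_smul]
    simp only [mul_sub, Finset.sum_sub_distrib, ← Finset.sum_mul, hμ1, one_mul, ← this, sub_self]
  have hsupp := (Finset.sum_eq_zero_iff_of_nonneg
    fun y hy => mul_nonneg (hμ0 y hy) (sub_nonneg.2 (hmax y hy))).1 hlx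
  suffices (T.filter (μ · ≠ 0)).centerMass μ id ∈ convexHull ℝ (T.filter (l · = l x) : Set E) by
    rwa [Finset.centerMass_filter_ne_zero, hxμ] at this
  refine Finset.centerMass_mem_convexHull _ (fun y hy => hμ0 y (Finset.mem_filter.1 hy).1)
    (by rw [Finset.sum_filter_ne_zero, hμ1]; exact one_pos) fun y hy => ?_
  obtain ⟨hyT, hy0⟩ := Finset.mem_filter.1 hy
  have := (mul_eq_zero.1 (hsupp y hyT)).resolve_left hy0
  exact Finset.mem_filter.2 ⟨hyT, (sub_eq_zero.1 this).symm⟩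

theorem map_lineMap (l : L) (w y : E) (μ : ℝ) :
    l (AffineMap.lineMap w y μ) = l w + μ * (l y - l w) := by
  rw [AffineMap.lineMap_apply_module', map_add, map_smul, map_sub, smul_eq_mul, add_comm]

theorem map_lineMap_lt_iff (l : L) {w y : E} {μ : ℝ} (hμ : 0 < μ) :
    l (AffineMap.lineMap w y μ) < l w ↔ l y < l w := by
  rw [map_lineMap, add_lt_iff_neg_left]
  constructor <;> intro h <;> nlinarith

theorem map_lineMap_eq_iff (l : L) {w y : E} {μ : ℝ} (hμ : 0 < μ) :
    l (AffineMap.lineMap w y μ) = l w ↔ l y = l w := by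
  rw [map_lineMap, add_eq_left, mul_eq_zero, sub_eq_zero, or_iff_right hμ.ne']

/-- The one of `y`, `u` closer to `w` would lie in the open segment from `w` to the other. -/
theorem eq_of_lineMap_eq_lineMap {A : Set E}
    {w y u : E} (hy : y ∈ A.extremePoints ℝ) (hu : u ∈ A.extremePoints ℝ) (hw : w ∈ A)
    (hwy : w ≠ y) (hwu : w ≠ u) {μ ν : ℝ} (hμ : 0 < μ) (hν : 0 < ν)
    (h : AffineMap.lineMap w y μ = AffineMap.lineMap w u ν) : y = u := by
  wlog hle : μ ≤ ν generalizing y u μ ν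
  · exact (this hu hy hwu hwy hν hμ h.symm (le_of_not_ge hle)).symm
  rw [AffineMap.lineMap_apply_module', AffineMap.lineMap_apply_module', add_left_inj] at h
  have hu_eq : u = AffineMap.lineMap w y (μ / ν) := by
    rw [AffineMap.lineMap_apply_module', div_eq_inv_mul, mul_smul, h, inv_smul_smul₀ hν.ne',
      sub_add_cancel]
  rcases hle.lt_or_eq with hlt | rfl
  · have hseg : u ∈ openSegment ℝ w y := by
      rw [openSegment_eq_image_lineMap, hu_eq]
      exact ⟨μ / ν, ⟨div_pos hμ hν, (div_lt_one hν).2 hlt⟩, rfl⟩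
    exact absurd (hu.2 hw hy.1 hseg) hwu
  · rwa [div_self hν.ne', AffineMap.lineMap_apply_one, eq_comm] at hu_eq

end LinearFunctional

theorem Finset.exists_forall_lt_mul {α : Type*} (s : Finset α) (f : α → ℝ) {g : α → ℝ}
    (hg : ∀ y ∈ s, 0 < g y) : ∃ K : ℝ, ∀ y ∈ s, f y < K * g y :=
  ((Filter.eventually_all_finset s).2 fun y hy =>
    (Filter.tendsto_id.atTop_mul_const (hg y hy)).eventually_gt_atTop (f y)).exists

section Polytope

variable {E : Type*} [NormedAddCommGroup E] [NormedSpace ℝ E]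

theorem Set.Finite.convexHull_extremePoints_convexHull {s : Set E} (hs : s.Finite) :
    convexHull ℝ ((convexHull ℝ s).extremePoints ℝ) = convexHull ℝ s := by
  have hfin : ((convexHull ℝ s).extremePoints ℝ).Finite := hs.subset extremePoints_convexHull_subset
  rw [← (hfin.isCompact_convexHull ℝ).isClosed.closure_eq]
  exact closure_convexHull_extremePoints (hs.isCompact_convexHull ℝ) (convex_convexHull ℝ s)

theorem mem_extremePoints_convexHull_pair (v w : E) :
    v ∈ (convexHull ℝ {v, w}).extremePoints ℝ := by
  by_contra hv
  have hsub : (convexHull ℝ {v, w}).extremePoints ℝ ⊆ {w} := fun x hx => by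
    rcases extremePoints_convexHull_subset hx with rfl | h
    exacts [absurd hx hv, h]
  have hvw : v ∈ ({w} : Set E) := by
    rw [← convexHull_singleton (𝕜 := ℝ) w]
    refine convexHull_mono hsub ?_
    rw [(toFinite _).convexHull_extremePoints_convexHull]
    exact subset_convexHull ℝ _ (mem_insert v _)
  rw [mem_singleton_iff.1 hvw, pair_eq_singleton, convexHull_singleton,
    extremePoints_singleton] at hv
  exact hv rfl

theorem exists_forall_lt_of_mem_extremePoints_convexHull {T : Finset E} {x : E}
    (hx : x ∈ (convexHull ℝ (T : Set E)).extremePoints ℝ) :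
    ∃ f : StrongDual ℝ E, ∀ y ∈ convexHull ℝ (T : Set E), y ≠ x → f y < f x := by
  have hxT : x ∈ T := extremePoints_convexHull_subset hx
  have hx_notMem : x ∉ convexHull ℝ (T.erase x : Set E) := fun hmem =>
    have hsub : convexHull ℝ (T.erase x : Set E) ⊆ convexHull ℝ T :=
      convexHull_mono (Finset.coe_subset.2 (T.erase_subset x))
    (Finset.mem_erase.1 (extremePoints_convexHull_subset
      (inter_extremePoints_subset_extremePoints_of_subset hsub ⟨hmem, hx⟩))).1 rfl
  obtain ⟨f, a, hfa, haf⟩ := geometric_hahn_banach_closed_point (convex_convexHull ℝ _)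
    ((T.erase x).finite_toSet.isCompact_convexHull ℝ).isClosed hx_notMem
  have hlt : ∀ y ∈ T, y ≠ x → f y < f x := fun y hy hyx =>
    (hfa y (subset_convexHull ℝ _ (Finset.mem_erase.2 ⟨hyx, hy⟩))).trans haf
  have hle : ∀ z ∈ T, f z ≤ f x := fun z hz => by
    rcases eq_or_ne z x with rfl | hzx
    exacts [le_rfl, (hlt z hz hzx).le]
  refine ⟨f, fun y hy hyx => (le_of_mem_convexHull f hle hy).lt_of_ne fun hyf => hyx ?_⟩
  have hfilter : (T.filter (f · = f y) : Set E) ⊆ {x} := fun z hz => by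
    obtain ⟨hzT, hzy⟩ := Finset.mem_filter.1 hz
    by_contra hzx
    exact (hlt z hzT hzx).ne (hzy.trans hyf)
  exact convexHull_min hfilter (convex_singleton x)
    (mem_convexHull_filter_of_forall_le f hy (hyf ▸ hle))

theorem toExposed_convexHull_finset (l : StrongDual ℝ E) (T : Finset E) :
    {x ∈ convexHull ℝ (T : Set E) | ∀ y ∈ convexHull ℝ (T : Set E), l y ≤ l x} =
      convexHull ℝ (T.filter fun s => ∀ t ∈ T, l t ≤ l s : Set E) := by
  ext x
  constructor
  · rintro ⟨hx, hmax⟩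
    refine convexHull_mono (fun s hs => ?_)
      (mem_convexHull_filter_of_forall_le l hx fun y hy => hmax y (subset_convexHull ℝ _ hy))
    obtain ⟨hsT, hsx⟩ := Finset.mem_filter.1 hs
    exact Finset.mem_filter.2 ⟨hsT, fun t ht => hsx ▸ hmax t (subset_convexHull ℝ _ ht)⟩
  · intro hx
    obtain ⟨m, hm⟩ := convexHull_nonempty_iff.1 ⟨x, hx⟩
    obtain ⟨hmT, hmax⟩ := Finset.mem_filter.1 hm
    refine ⟨convexHull_mono (Finset.coe_subset.2 (Finset.filter_subset _ T)) hx, fun y hy => ?_⟩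
    by_contra! hxy
    obtain ⟨s, hs, hsm⟩ :=
      exists_lt_of_mem_convexHull l hx (hxy.trans_le (le_of_mem_convexHull l hmax hy))
    exact hsm.not_ge ((Finset.mem_filter.1 hs).2 m hmT)

/-- On the hyperplane `g = t` the tilted functional `h + a • g` differs from `h` by a constant;
`a` is chosen to bring `w` to the level of `x`. -/
theorem exists_map_eq_forall_lt_of_hyperplane {g h : StrongDual ℝ E} {t : ℝ} {w x : E}
    (hw : g w ≠ t) (hx : g x = t) {S : Set E} (hS : ∀ z ∈ S, g z = t)
    (hh : ∀ z ∈ S, z ≠ x → h z < h x) :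
    ∃ Φ : StrongDual ℝ E, Φ x = Φ w ∧ ∀ z ∈ S, z ≠ x → Φ z < Φ w := by
  set a := (h x - h w) / (g w - t)
  have hΦ : ∀ z, (h + a • g) z = h z + a * g z := fun z => rfl
  have hxw : (h + a • g) x = (h + a • g) w := by
    rw [hΦ, hΦ, hx]
    have : a * (g w - t) = h x - h w := div_mul_cancel₀ _ (sub_ne_zero.2 hw)
    linarith
  refine ⟨h + a • g, hxw, fun z hz hzx => ?_⟩
  rw [← hxw, hΦ, hΦ, hS z hz, hx]
  linarith [hh z hz hzx]

theorem isExposed_convexHull_pair {V : Finset E} {w u : E} (hw : w ∈ V) (hu : u ∈ V)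
    (l : StrongDual ℝ E) (hlu : l u = l w) (hlt : ∀ y ∈ V, y ≠ w → y ≠ u → l y < l w) :
    IsExposed ℝ (convexHull ℝ (V : Set E)) (convexHull ℝ {w, u}) := by
  have hle : ∀ y ∈ V, l y ≤ l w := fun y hy => by
    by_cases hyw : y = w
    · exact hyw ▸ le_rfl
    by_cases hyu : y = u
    · exact hyu ▸ hlu.le
    exact (hlt y hy hyw hyu).le
  have hmax : V.filter (fun s => ∀ t ∈ V, l t ≤ l s) = {w, u} := by
    ext s
    simp only [Finset.mem_filter, Finset.mem_insert, Finset.mem_singleton]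
    constructor
    · rintro ⟨hs, hsmax⟩
      by_contra! hsne
      exact (hlt s hs hsne.1 hsne.2).not_ge (hsmax w hw)
    · rintro (rfl | rfl)
      exacts [⟨hw, hle⟩, ⟨hu, hlu ▸ hle⟩]
  exact fun _ => ⟨l, by rw [toExposed_convexHull_finset, hmax, Finset.coe_pair]⟩

/-- The edge is found in the vertex figure at `w`: project the other vertices `y` radially from `w`
to points `q y` on a hyperplane parallel to a supporting hyperplane that meets the polytope only
in `w`. An extreme point `q u` of the projected polytope lying below `c w` exposes `[w, u]`. -/
theorem exists_lt_isExposed_convexHull_pair {V : Finset E}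
    (hV : (convexHull ℝ (V : Set E)).extremePoints ℝ = V) (c : E →ₗ[ℝ] ℝ) {v w : E}
    (hv : v ∈ V) (hw : w ∈ V) (hvw : c v < c w) :
    ∃ u ∈ V, c u < c w ∧ IsExposed ℝ (convexHull ℝ (V : Set E)) (convexHull ℝ {w, u}) := by
  have hext : ∀ y ∈ V, y ∈ (convexHull ℝ (V : Set E)).extremePoints ℝ := fun y hy => by
    rw [hV]; exact hy
  obtain ⟨g, hg⟩ := exists_forall_lt_of_mem_extremePoints_convexHull (hext w hw)
  set W := V.erase w
  have hgW : ∀ y ∈ W, g y < g w := fun y hy =>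
    hg y (subset_convexHull ℝ _ (Finset.mem_of_mem_erase hy)) (Finset.ne_of_mem_erase hy)
  set μ : E → ℝ := fun y => (g w - g y)⁻¹
  have hμ : ∀ y ∈ W, 0 < μ y := fun y hy => inv_pos.2 (sub_pos.2 (hgW y hy))
  set q : E → E := fun y => AffineMap.lineMap w y (μ y)
  have hgq : ∀ y ∈ W, g (q y) = g w - 1 := fun y hy => by
    have : g w - g y ≠ 0 := (sub_pos.2 (hgW y hy)).ne'
    simp only [q, μ, map_lineMap]
    field_simp
    ring
  have hq_inj : ∀ y ∈ W, ∀ u ∈ W, q y = q u → y = u := fun y hy u hu =>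
    eq_of_lineMap_eq_lineMap (hext y (Finset.mem_of_mem_erase hy))
      (hext u (Finset.mem_of_mem_erase hu)) (subset_convexHull ℝ _ hw)
      (Finset.ne_of_mem_erase hy).symm (Finset.ne_of_mem_erase hu).symm (hμ y hy) (hμ u hu)
  have hvW : v ∈ W := Finset.mem_erase.2 ⟨fun h => hvw.ne (congrArg c h), hv⟩
  obtain ⟨x, hx, hcx⟩ := exists_lt_of_mem_convexHull c
    (by rw [(W.image q).finite_toSet.convexHull_extremePoints_convexHull]
        exact subset_convexHull ℝ _ (Finset.mem_image_of_mem q hvW))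
    ((map_lineMap_lt_iff c (hμ v hvW)).2 hvw)
  obtain ⟨u, huW, rfl⟩ := Finset.mem_image.1 (extremePoints_convexHull_subset hx)
  obtain ⟨h, hh⟩ := exists_forall_lt_of_mem_extremePoints_convexHull hx
  obtain ⟨Φ, hΦu, hΦ⟩ := exists_map_eq_forall_lt_of_hyperplane (by linarith : g w ≠ g w - 1)
    (hgq u huW) (S := W.image q)
    (fun z hz => by obtain ⟨y, hy, rfl⟩ := Finset.mem_image.1 hz; exact hgq y hy)
    fun z hz hzu => hh z (subset_convexHull ℝ _ hz) hzu
  refine ⟨u, Finset.mem_of_mem_erase huW, (map_lineMap_lt_iff c (hμ u huW)).1 hcx,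
    isExposed_convexHull_pair hw (Finset.mem_of_mem_erase huW) Φ
      ((map_lineMap_eq_iff Φ (hμ u huW)).1 hΦu) fun y hy hyw hyu => ?_⟩
  have hyW : y ∈ W := Finset.mem_erase.2 ⟨hyw, hy⟩
  exact (map_lineMap_lt_iff Φ (hμ y hyW)).1
    (hΦ _ (Finset.mem_image_of_mem q hyW) fun h => hyu (hq_inj y hyW u huW h))

end Polytope

section Faces

variable {n : ℕ} {P F : Set (EVec n)} {v w : EVec n}

theorem IsFace.isExposed (hF : IsFace P F) : IsExposed ℝ P F := by
  rcases hF with hF | rfl | rfl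
  exacts [hF, isExposed_empty, IsExposed.refl _]

theorem sdim_singleton (v : EVec n) : sdim ({v} : Set (EVec n)) = 0 := by
  rw [sdim, direction_affineSpan, vectorSpan_singleton, finrank_bot]

theorem sdim_convexHull_pair (h : v ≠ w) : sdim (convexHull ℝ {v, w} : Set (EVec n)) = 1 := by
  rw [sdim, affineSpan_convexHull, direction_affineSpan, vectorSpan_pair]
  exact finrank_span_singleton (sub_ne_zero.2 h)

theorem Adj.ne (h : Adj P v w) : v ≠ w := by
  rintro rfl
  have := h.2.2
  rw [pair_eq_singleton, convexHull_singleton, sdim_singleton] at this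
  exact zero_ne_one this

theorem Adj.symm (h : Adj P v w) : Adj P w v := by
  rwa [Adj, pair_comm]

theorem adj_of_isExposed (h : IsExposed ℝ P (convexHull ℝ {v, w})) (hvw : v ≠ w) : Adj P v w :=
  ⟨Or.inl h, ⟨v, subset_convexHull ℝ _ (mem_insert v _)⟩, sdim_convexHull_pair hvw⟩

namespace IsPolytope

theorem isVertex_iff (hP : IsPolytope P) : IsVertex P v ↔ v ∈ P.extremePoints ℝ := by
  refine ⟨fun hv => isExtreme_singleton.1 hv.1.isExposed.isExtreme, fun hv => ?_⟩
  obtain ⟨S, rfl⟩ := hP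
  obtain ⟨f, hf⟩ := exists_forall_lt_of_mem_extremePoints_convexHull hv
  refine ⟨Or.inl fun _ => ⟨f, ?_⟩, singleton_nonempty v, sdim_singleton v⟩
  ext x
  refine ⟨?_, fun ⟨hx, hmax⟩ => by_contra fun hxv => (hf x hx hxv).not_ge (hmax v hv.1)⟩
  rintro rfl
  refine ⟨hv.1, fun y hy => ?_⟩
  rcases eq_or_ne y x with rfl | hyx
  exacts [le_rfl, (hf y hy hyx).le]

theorem vertSet_eq (hP : IsPolytope P) : vertSet P = P.extremePoints ℝ :=
  Set.ext fun _ => hP.isVertex_iff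

theorem exists_finset_extremePoints (hP : IsPolytope P) :
    ∃ V : Finset (EVec n), P = convexHull ℝ (V : Set (EVec n)) ∧ P.extremePoints ℝ = V := by
  obtain ⟨S, rfl⟩ := hP
  have hfin := S.finite_toSet.subset (extremePoints_convexHull_subset (𝕜 := ℝ))
  refine ⟨hfin.toFinset, ?_, hfin.coe_toFinset.symm⟩
  rw [hfin.coe_toFinset, S.finite_toSet.convexHull_extremePoints_convexHull]

theorem of_isExposed (hP : IsPolytope P) (hF : IsExposed ℝ P F) : IsPolytope F := by
  obtain ⟨S, rfl⟩ := hP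
  rcases F.eq_empty_or_nonempty with rfl | hne
  · exact ⟨∅, by simp⟩
  obtain ⟨l, rfl⟩ := hF hne
  exact ⟨_, toExposed_convexHull_finset l S⟩

theorem exists_finset_vertFace (hP : IsPolytope P) (hF : IsFace P F) :
    ∃ V : Finset (EVec n), vertFace P F = V ∧ F = convexHull ℝ (V : Set (EVec n)) := by
  obtain ⟨V, hFV, hV⟩ := (hP.of_isExposed hF.isExposed).exists_finset_extremePoints
  refine ⟨V, ?_, hFV⟩
  rw [← hV, hF.isExposed.isExtreme.extremePoints_eq, vertFace, hP.vertSet_eq, inter_comm]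

theorem isVertex_of_adj (hP : IsPolytope P) (h : Adj P v w) : IsVertex P v :=
  hP.isVertex_iff.2 <| h.1.isExposed.isExtreme.extremePoints_subset_extremePoints
    (mem_extremePoints_convexHull_pair v w)

/-- Tilting `c` by a large multiple of a functional exposing `F` makes every vertex outside `F`
higher than `w`, so that the descending edge found in `P` stays in `F`. -/
theorem exists_adj_lt (hP : IsPolytope P) (hF : IsFace P F) (c : EVec n →ₗ[ℝ] ℝ)
    (hv : v ∈ vertFace P F) (hw : w ∈ vertFace P F) (hvw : c v < c w) :
    ∃ u ∈ vertFace P F, Adj P w u ∧ c u < c w := by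
  obtain ⟨V, hPV, hV⟩ := hP.exists_finset_extremePoints
  have hVert : ∀ {y}, IsVertex P y ↔ y ∈ V := by
    intro y; rw [hP.isVertex_iff, hV, Finset.mem_coe]
  obtain ⟨e, rfl⟩ := hF.isExposed ⟨w, hw.2⟩
  have he : ∀ y ∈ P, e y ≤ e w := hw.2.2
  have he_out : ∀ y ∈ V.filter (· ∉ {x ∈ P | ∀ y ∈ P, e y ≤ e x}), 0 < e w - e y := by
    intro y hy
    obtain ⟨hyV, hyF⟩ := Finset.mem_filter.1 hy
    have hyP : y ∈ P := hPV ▸ subset_convexHull ℝ _ hyV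
    exact sub_pos.2 ((he y hyP).lt_of_ne fun hyw => hyF ⟨hyP, fun z hz => hyw ▸ he z hz⟩)
  obtain ⟨K, hK⟩ := Finset.exists_forall_lt_mul _ (fun y => c w - c y) he_out
  obtain ⟨u, huV, hcu, hexp⟩ := exists_lt_isExposed_convexHull_pair (hPV ▸ hV)
    (c - K • (e : EVec n →ₗ[ℝ] ℝ)) (hVert.1 hv.1) (hVert.1 hw.1) (by
      simp only [LinearMap.sub_apply, LinearMap.smul_apply, ContinuousLinearMap.coe_coe,
        smul_eq_mul, le_antisymm (he v hv.2.1) (hv.2.2 w hw.2.1)]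
      linarith)
  simp only [LinearMap.sub_apply, LinearMap.smul_apply, ContinuousLinearMap.coe_coe,
    smul_eq_mul] at hcu
  have huP : u ∈ P := hPV ▸ subset_convexHull ℝ _ huV
  have huF : u ∈ {x ∈ P | ∀ y ∈ P, e y ≤ e x} := by
    by_contra huF
    linarith [hK u (Finset.mem_filter.2 ⟨huV, huF⟩)]
  refine ⟨u, ⟨hVert.2 huV, huF⟩, adj_of_isExposed (hPV ▸ hexp) fun hwu => hcu.ne (hwu ▸ rfl), ?_⟩
  rw [le_antisymm (he u huP) (huF.2 w hw.2.1)] at hcu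
  linarith

theorem isSinkOn_iff (hP : IsPolytope P) (hF : IsFace P F) (c : EVec n →ₗ[ℝ] ℝ)
    (hc : ∀ v w, IsVertex P v → IsVertex P w → v ≠ w → c v ≠ c w) :
    IsSinkOn P (fun v w => Adj P v w ∧ c w < c v) (vertFace P F) w ↔
      w ∈ vertFace P F ∧ ∀ u ∈ vertFace P F, c w ≤ c u := by
  refine ⟨fun ⟨hw, hsink⟩ => ⟨hw, fun u hu => ?_⟩,
    fun ⟨hw, hmin⟩ => ⟨hw, fun u hu hwu => ⟨hwu.symm, ?_⟩⟩⟩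
  · by_contra! hlt
    obtain ⟨u', hu', hadj, hlt'⟩ := hP.exists_adj_lt hF c hu hw hlt
    exact (hsink u' hu' hadj).2.not_gt hlt'
  · exact (hmin u hu).lt_of_ne (hc w u hw.1 hu.1 hwu.ne)

end IsPolytope

end Faces

/-- A linear functional taking pairwise distinct values on the vertices
of a simple polytope induces (directing each edge from larger to smaller value) an
AOF-orientation of `G(P)`. -/
theorem stmt6 {n d : ℕ} (P : Set (EVec n)) (hP : IsSimplePolytope P d)
    (c : EVec n →ₗ[ℝ] ℝ)
    (hc : ∀ v w, IsVertex P v → IsVertex P w → v ≠ w → c v ≠ c w) :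
    IsAOF P (fun v w => Adj P v w ∧ c w < c v) := by
  have hPoly : IsPolytope P := hP.1
  refine ⟨⟨fun v w h => h.1, fun v w hvw => ⟨?_, fun h => ⟨hvw, ?_⟩⟩⟩, fun v hv => ?_,
    fun F hF hne => ?_⟩
  · rintro ⟨-, h⟩ ⟨-, h'⟩
    exact h.asymm h'
  · exact (lt_or_gt_of_ne (hc v w (hPoly.isVertex_of_adj hvw) (hPoly.isVertex_of_adj hvw.symm)
      hvw.ne)).resolve_left fun h' => h ⟨hvw.symm, h'⟩
  · have hdesc : ∀ a b, Relation.TransGen (fun v w => Adj P v w ∧ c w < c v) a b → c b < c a :=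
      fun _ _ h => h.trans_induction_on (fun h => h.2) fun _ _ h₁ h₂ => h₂.trans h₁
    exact lt_irrefl _ (hdesc v v hv)
  · obtain ⟨V, hVF, hFV⟩ := hPoly.exists_finset_vertFace hF
    obtain ⟨w, hwV, hwmin⟩ := V.exists_min_image c
      (Finset.coe_nonempty.1 (convexHull_nonempty_iff.1 (hFV ▸ hne)))
    rw [← Finset.mem_coe, ← hVF] at hwV
    have hwmin' : ∀ u ∈ vertFace P F, c w ≤ c u := hVF ▸ hwmin
    refine ⟨w, (hPoly.isSinkOn_iff hF c hc).2 ⟨hwV, hwmin'⟩, fun y hy => ?_⟩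
    obtain ⟨hyF, hymin⟩ := (hPoly.isSinkOn_iff hF c hc).1 hy
    by_contra hyw
    exact hc y w hyF.1 hwV.1 hyw ((hymin w hwV).antisymm (hwmin' y hyF))
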